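/- Fix y ∈ ℝ, ε > 0 and ν > 0, and define Ψ₀(m) = ∫ 2·max(0, |y − η| − ε) φ(η; m, ν²) dη. Then for every m ∈ ℝ, the second derivative of Ψ₀ with respect to m equals 2[ φ(y + ε; m, ν²) + φ(y − ε; m, ν²) ]. -/

import Mathlib

/-!
For `ε ≥ 0` the loss splits into two hinges, `max 0 (|y - η| - ε) = (η - (y + ε))⁺ + ((y - ε) - η)⁺`.
Since `ν² φ(·; m, ν²)` is an antiderivative of `(m - η) φ(η; m, ν²)`, the Gaussian expectations of
the hinges have closed forms: `E (η - c)⁺ = (m - c)(1 - Φ(c)) + ν² φ(c)` and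
`E (c - η)⁺ = (c - m) Φ(c) + ν² φ(c)`. Translation invariance gives `∂ₘ Φ(c; m, ν²) = -φ(c; m, ν²)`
and `∂ₘ φ(c; m, ν²) = (c - m)/ν² · φ(c; m, ν²)`, so the `φ` terms cancel on differentiating and
`Ψ₀'(m) = 2 (1 - Φ(y + ε) - Φ(y - ε))`; differentiating once more gives the claim.
-/

open MeasureTheory Real Filter

/-- Gaussian density with mean `m` and variance `ν ^ 2`, evaluated at `x`:
`φ(x; m, ν²) = (2πν²)^{-1/2} exp(−(x−m)²/(2ν²))`. -/
noncomputable def gpdf (m ν x : ℝ) : ℝ :=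
  (Real.sqrt (2 * Real.pi * ν ^ 2))⁻¹ * Real.exp (-((x - m) ^ 2) / (2 * ν ^ 2))

/-- Gaussian cumulative distribution function with mean `m` and variance `ν ^ 2`:
`Φ(c; m, ν²) = ∫_{−∞}^{c} φ(η; m, ν²) dη`. -/
noncomputable def gcdf (m ν c : ℝ) : ℝ := ∫ x in Set.Iio c, gpdf m ν x

open Set ProbabilityTheory

lemma gpdf_eq_gaussianPDFReal (m ν : ℝ) :
    gpdf m ν = gaussianPDFReal m ⟨ν ^ 2, sq_nonneg ν⟩ := rfl

lemma gpdf_eq_gpdf_zero_sub (m ν x : ℝ) : gpdf m ν x = gpdf 0 ν (x - m) := by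
  simp [gpdf]

lemma gpdf_comm (m ν x : ℝ) : gpdf m ν x = gpdf x ν m := by
  simp only [gpdf, ← neg_sub x m, neg_sq]

lemma continuous_gpdf (m ν : ℝ) : Continuous (gpdf m ν) := by
  unfold gpdf
  fun_prop

lemma integrable_gpdf (m ν : ℝ) : Integrable (gpdf m ν) := by
  rw [gpdf_eq_gaussianPDFReal]
  exact integrable_gaussianPDFReal m _

lemma integral_gpdf {ν : ℝ} (hν : ν ≠ 0) (m : ℝ) : ∫ x, gpdf m ν x = 1 := by
  rw [gpdf_eq_gaussianPDFReal]
  exact integral_gaussianPDFReal_eq_one m (NNReal.coe_ne_zero.mp (pow_ne_zero 2 hν))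

lemma integrable_sub_const_mul_gpdf {ν : ℝ} (hν : ν ≠ 0) (m c : ℝ) :
    Integrable (fun x => (x - c) * gpdf m ν x) := by
  have hb : (0 : ℝ) < (2 * ν ^ 2)⁻¹ := by positivity
  have h1 := ((integrable_mul_exp_neg_mul_sq hb).const_mul
    (√(2 * π * ν ^ 2))⁻¹).comp_sub_right m
  refine (h1.add ((integrable_gpdf m ν).const_mul (m - c))).congr
    (Eventually.of_forall fun x => ?_)
  simp only [Pi.add_apply, gpdf]
  ring_nf

lemma integrable_const_sub_mul_gpdf {ν : ℝ} (hν : ν ≠ 0) (m c : ℝ) :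
    Integrable (fun x => (c - x) * gpdf m ν x) := by
  refine (integrable_sub_const_mul_gpdf hν m c).neg.congr (Eventually.of_forall fun x => ?_)
  simp only [Pi.neg_apply]
  ring

lemma hasDerivAt_gpdf (m ν x : ℝ) :
    HasDerivAt (gpdf m ν) ((m - x) / ν ^ 2 * gpdf m ν x) x := by
  have h := ((((hasDerivAt_id' x).sub_const m).pow 2).neg.div_const (2 * ν ^ 2)).exp.const_mul
    (√(2 * π * ν ^ 2))⁻¹
  refine h.congr_deriv ?_
  simp only [gpdf, Pi.neg_apply, Pi.pow_apply]
  ring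

lemma hasDerivAt_gpdf_mean (m ν c : ℝ) :
    HasDerivAt (fun m' => gpdf m' ν c) ((c - m) / ν ^ 2 * gpdf m ν c) m := by
  rw [show (fun m' => gpdf m' ν c) = gpdf c ν from funext fun m' => gpdf_comm m' ν c, gpdf_comm]
  exact hasDerivAt_gpdf c ν m

lemma tendsto_gpdf_cocompact {ν : ℝ} (hν : ν ≠ 0) (m : ℝ) :
    Tendsto (gpdf m ν) (cocompact ℝ) (nhds 0) := by
  have hsq : Tendsto (fun x : ℝ => (x - m) ^ 2) (cocompact ℝ) atTop := by
    have h := (tendsto_pow_atTop two_ne_zero).comp (tendsto_norm_cocompact_atTop.comp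
      (Homeomorph.subRight m).isClosedEmbedding.tendsto_cocompact)
    simpa only [Function.comp_def, Homeomorph.subRight_apply, Real.norm_eq_abs, sq_abs] using h
  have h := (tendsto_exp_atBot.comp ((tendsto_neg_atTop_atBot.comp hsq).atBot_div_const
    (by positivity : (0 : ℝ) < 2 * ν ^ 2))).const_mul (√(2 * π * ν ^ 2))⁻¹
  unfold gpdf
  simpa only [Function.comp_def, neg_div, mul_zero] using h

lemma setIntegral_Ioi_gpdf {ν : ℝ} (hν : ν ≠ 0) (m c : ℝ) :
    ∫ x in Ioi c, gpdf m ν x = 1 - gcdf m ν c := by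
  rw [gcdf, ← integral_Iic_eq_integral_Iio, ← integral_gpdf hν m,
    ← intervalIntegral.integral_Iic_add_Ioi (integrable_gpdf m ν).integrableOn
      (integrable_gpdf m ν).integrableOn]
  ring

lemma hasDerivAt_gcdf (m ν c : ℝ) : HasDerivAt (gcdf m ν) (gpdf m ν c) c := by
  have hsplit : gcdf m ν = fun t => (∫ x in Iic 0, gpdf m ν x) + ∫ x in (0)..t, gpdf m ν x := by
    funext t
    rw [gcdf, ← integral_Iic_eq_integral_Iio, ← intervalIntegral.integral_Iic_sub_Iic
      (integrable_gpdf m ν).integrableOn (integrable_gpdf m ν).integrableOn]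
    ring
  rw [hsplit]
  exact (intervalIntegral.integral_hasDerivAt_right (integrable_gpdf m ν).intervalIntegrable
    ((continuous_gpdf m ν).stronglyMeasurableAtFilter _ _)
    (continuous_gpdf m ν).continuousAt).const_add _

lemma gcdf_eq_gcdf_zero_sub (m ν c : ℝ) : gcdf m ν c = gcdf 0 ν (c - m) := by
  have h := (measurePreserving_sub_right volume m).setIntegral_preimage_emb
    (measurableEmbedding_subRight m) (gpdf 0 ν) (Iio (c - m))
  rw [preimage_sub_const_Iio, sub_add_cancel] at h
  simp only [gcdf, gpdf_eq_gpdf_zero_sub m ν]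
  exact h

lemma hasDerivAt_gcdf_mean (m ν c : ℝ) :
    HasDerivAt (fun m' => gcdf m' ν c) (-gpdf m ν c) m := by
  simp only [gcdf_eq_gcdf_zero_sub _ ν c]
  refine ((hasDerivAt_gcdf 0 ν (c - m)).comp m ((hasDerivAt_id m).const_sub c)).congr_deriv ?_
  rw [gpdf_eq_gpdf_zero_sub m ν c]
  ring

lemma hasDerivAt_sq_mul_gpdf {ν : ℝ} (hν : ν ≠ 0) (m x : ℝ) :
    HasDerivAt (fun x => ν ^ 2 * gpdf m ν x) ((m - x) * gpdf m ν x) x :=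
  ((hasDerivAt_gpdf m ν x).const_mul (ν ^ 2)).congr_deriv (by field_simp)

lemma tendsto_sq_mul_gpdf_cocompact {ν : ℝ} (hν : ν ≠ 0) (m : ℝ) :
    Tendsto (fun x => ν ^ 2 * gpdf m ν x) (cocompact ℝ) (nhds 0) := by
  simpa only [mul_zero] using (tendsto_gpdf_cocompact hν m).const_mul (ν ^ 2)

lemma integral_Iio_const_sub_mul_gpdf {ν : ℝ} (hν : ν ≠ 0) (m c : ℝ) :
    ∫ x in Iio c, (c - x) * gpdf m ν x = (c - m) * gcdf m ν c + ν ^ 2 * gpdf m ν c := by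
  have hmean : ∫ x in Iic c, (m - x) * gpdf m ν x = ν ^ 2 * gpdf m ν c := by
    rw [integral_Iic_of_hasDerivAt_of_tendsto' (fun x _ => hasDerivAt_sq_mul_gpdf hν m x)
      (integrable_const_sub_mul_gpdf hν m m).integrableOn
      ((tendsto_sq_mul_gpdf_cocompact hν m).mono_left atBot_le_cocompact), sub_zero]
  have hsplit : ∀ x, (c - x) * gpdf m ν x = (m - x) * gpdf m ν x + (c - m) * gpdf m ν x :=
    fun x => by ring
  simp_rw [← integral_Iic_eq_integral_Iio, hsplit]
  rw [integral_add (integrable_const_sub_mul_gpdf hν m m).integrableOn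
    ((integrable_gpdf m ν).const_mul _).integrableOn, integral_const_mul, hmean, gcdf,
    integral_Iic_eq_integral_Iio]
  ring

lemma integral_Ioi_sub_const_mul_gpdf {ν : ℝ} (hν : ν ≠ 0) (m c : ℝ) :
    ∫ x in Ioi c, (x - c) * gpdf m ν x = (m - c) * (1 - gcdf m ν c) + ν ^ 2 * gpdf m ν c := by
  have hmean : ∫ x in Ioi c, (m - x) * gpdf m ν x = -(ν ^ 2 * gpdf m ν c) := by
    rw [integral_Ioi_of_hasDerivAt_of_tendsto' (fun x _ => hasDerivAt_sq_mul_gpdf hν m x)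
      (integrable_const_sub_mul_gpdf hν m m).integrableOn
      ((tendsto_sq_mul_gpdf_cocompact hν m).mono_left atTop_le_cocompact), zero_sub]
  have hsplit : ∀ x, (x - c) * gpdf m ν x = (m - c) * gpdf m ν x - (m - x) * gpdf m ν x :=
    fun x => by ring
  simp_rw [hsplit]
  rw [integral_sub ((integrable_gpdf m ν).const_mul _).integrableOn
    (integrable_const_sub_mul_gpdf hν m m).integrableOn, integral_const_mul, hmean,
    setIntegral_Ioi_gpdf hν]
  ring

lemma max_zero_sub_const_mul_eq_indicator (f : ℝ → ℝ) (c x : ℝ) :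
    max 0 (x - c) * f x = (Ioi c).indicator (fun x => (x - c) * f x) x := by
  simp only [indicator_apply, mem_Ioi]
  split_ifs with h
  · rw [max_eq_right (sub_nonneg.mpr h.le)]
  · rw [max_eq_left (sub_nonpos.mpr (not_lt.mp h)), zero_mul]

lemma max_zero_const_sub_mul_eq_indicator (f : ℝ → ℝ) (c x : ℝ) :
    max 0 (c - x) * f x = (Iio c).indicator (fun x => (c - x) * f x) x := by
  simp only [indicator_apply, mem_Iio]
  split_ifs with h
  · rw [max_eq_right (sub_nonneg.mpr h.le)]
  · rw [max_eq_left (sub_nonpos.mpr (not_lt.mp h)), zero_mul]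

lemma integrable_max_zero_sub_const_mul_gpdf {ν : ℝ} (hν : ν ≠ 0) (m c : ℝ) :
    Integrable (fun x => max 0 (x - c) * gpdf m ν x) := by
  simp_rw [max_zero_sub_const_mul_eq_indicator]
  exact (integrable_sub_const_mul_gpdf hν m c).indicator measurableSet_Ioi

lemma integrable_max_zero_const_sub_mul_gpdf {ν : ℝ} (hν : ν ≠ 0) (m c : ℝ) :
    Integrable (fun x => max 0 (c - x) * gpdf m ν x) := by
  simp_rw [max_zero_const_sub_mul_eq_indicator]
  exact (integrable_const_sub_mul_gpdf hν m c).indicator measurableSet_Iio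

lemma hasDerivAt_integral_max_zero_sub_const_mul_gpdf {ν : ℝ} (hν : ν ≠ 0) (m c : ℝ) :
    HasDerivAt (fun m' => ∫ x, max 0 (x - c) * gpdf m' ν x) (1 - gcdf m ν c) m := by
  simp_rw [max_zero_sub_const_mul_eq_indicator, integral_indicator measurableSet_Ioi,
    integral_Ioi_sub_const_mul_gpdf hν]
  refine ((((hasDerivAt_id' m).sub_const c).mul ((hasDerivAt_gcdf_mean m ν c).const_sub 1)).add
    ((hasDerivAt_gpdf_mean m ν c).const_mul (ν ^ 2))).congr_deriv ?_
  field_simp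
  ring

lemma hasDerivAt_integral_max_zero_const_sub_mul_gpdf {ν : ℝ} (hν : ν ≠ 0) (m c : ℝ) :
    HasDerivAt (fun m' => ∫ x, max 0 (c - x) * gpdf m' ν x) (-gcdf m ν c) m := by
  simp_rw [max_zero_const_sub_mul_eq_indicator, integral_indicator measurableSet_Iio,
    integral_Iio_const_sub_mul_gpdf hν]
  refine ((((hasDerivAt_id' m).const_sub c).mul (hasDerivAt_gcdf_mean m ν c)).add
    ((hasDerivAt_gpdf_mean m ν c).const_mul (ν ^ 2))).congr_deriv ?_
  field_simp
  ring

lemma max_zero_abs_sub_sub_eq {ε : ℝ} (hε : 0 ≤ ε) (y η : ℝ) :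
    max 0 (|y - η| - ε) = max 0 (η - (y + ε)) + max 0 (y - ε - η) := by
  rcases le_total η y with h | h
  · rw [abs_of_nonneg (sub_nonneg.mpr h), max_eq_left (by linarith : η - (y + ε) ≤ 0), zero_add,
      sub_right_comm]
  · rw [abs_of_nonpos (sub_nonpos.mpr h), max_eq_left (by linarith : y - ε - η ≤ 0), add_zero]
    congr 1
    ring

lemma hasDerivAt_integral_epsInsensitive_mul_gpdf {ε ν : ℝ} (hε : 0 ≤ ε) (hν : ν ≠ 0) (y m : ℝ) :
    HasDerivAt (fun m' => ∫ η, 2 * max 0 (|y - η| - ε) * gpdf m' ν η)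
      (2 * (1 - gcdf m ν (y + ε) - gcdf m ν (y - ε))) m := by
  have hsplit : ∀ m', ∫ η, 2 * max 0 (|y - η| - ε) * gpdf m' ν η
      = 2 * ((∫ η, max 0 (η - (y + ε)) * gpdf m' ν η) + ∫ η, max 0 (y - ε - η) * gpdf m' ν η) := by
    intro m'
    simp_rw [max_zero_abs_sub_sub_eq hε, mul_assoc, add_mul]
    rw [integral_const_mul, integral_add (integrable_max_zero_sub_const_mul_gpdf hν m' _)
      (integrable_max_zero_const_sub_mul_gpdf hν m' _)]
  simp_rw [hsplit]
  refine (((hasDerivAt_integral_max_zero_sub_const_mul_gpdf hν m _).add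
    (hasDerivAt_integral_max_zero_const_sub_mul_gpdf hν m _)).const_mul 2).congr_deriv ?_
  ring

theorem svr_Psi2 (y ε ν : ℝ) (hε : 0 < ε) (hν : 0 < ν) (m : ℝ) :
    HasDerivAt (deriv (fun m' => ∫ η, 2 * max 0 (|y - η| - ε) * gpdf m' ν η))
      (2 * (gpdf m ν (y + ε) + gpdf m ν (y - ε))) m := by
  have hderiv : deriv (fun m' => ∫ η, 2 * max 0 (|y - η| - ε) * gpdf m' ν η)
      = fun m' => 2 * (1 - gcdf m' ν (y + ε) - gcdf m' ν (y - ε)) :=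
    funext fun m' => (hasDerivAt_integral_epsInsensitive_mul_gpdf hε.le hν.ne' y m').deriv
  rw [hderiv]
  refine ((((hasDerivAt_gcdf_mean m ν (y + ε)).const_sub 1).sub
    (hasDerivAt_gcdf_mean m ν (y - ε))).const_mul 2).congr_deriv ?_
  ring
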